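/- Let K be a field and b, c ∈ K such that the Kubert-Tate curve E(b,c) has nonzero discriminant and c ≠ 0. Then in the group of K-rational points of E(b,c), one has 4·(0,0) = ( b(b−c)/c² , b²(c² + c − b)/c³ ). -/

import Mathlib

/-!
Doubling twice. The tangent at `(0, 0)` is horizontal and meets the curve again at `(b, 0)`,
so `2 • (0, 0) = (b, bc)`; the tangent at `(b, bc)` has slope `(c² - c + b) / c`, and the
chord-tangent formulas give `4 • (0, 0)`. The only divisions are by `b` and `c`, and `b ∣ Δ`.
-/

open WeierstrassCurve WeierstrassCurve.Affine

/-- The Kubert-Tate normal form curve E(b,c) : y^2 + (1-c)xy - by = x^3 - bx^2. -/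
def Ebc {K : Type*} [CommRing K] (b c : K) : WeierstrassCurve.Affine K :=
  { a₁ := 1 - c, a₂ := -b, a₃ := -b, a₄ := 0, a₆ := 0 }
/-- The point (0, 0) on E(b,c), nonsingular since the discriminant is nonzero. -/
noncomputable def P₀ {K : Type*} [Field K] (b c : K) (hΔ : (Ebc b c).Δ ≠ 0) :
    (Ebc b c).Point :=
  .some _ _ ((WeierstrassCurve.Affine.equation_iff_nonsingular_of_Δ_ne_zero hΔ).mp
    ((Ebc b c).equation_zero.mpr rfl))

lemma WeierstrassCurve.Affine.Point.exists_add_self_eq_some {F : Type*} [Field F]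
    [DecidableEq F] {W : Affine F} {x y x' y' : F} (h : W.Nonsingular x y)
    (hy : y ≠ W.negY x y) (hx' : W.addX x x (W.slope x x y y) = x')
    (hy' : W.addY x x y (W.slope x x y y) = y') :
    ∃ h' : W.Nonsingular x' y', Point.some _ _ h + Point.some _ _ h = Point.some _ _ h' := by
  subst hx' hy'
  exact ⟨_, Point.add_self_of_Y_ne hy⟩

namespace Ebc

variable {K : Type*} [Field K] {b c : K}

lemma Δ_eq :
    (Ebc b c).Δ = b ^ 3 * (16 * b ^ 2 - 8 * b * c ^ 2 - 20 * b * c + b - c * (1 - c) ^ 3) := by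
  simp only [Ebc, WeierstrassCurve.Δ, WeierstrassCurve.b₂, WeierstrassCurve.b₄,
    WeierstrassCurve.b₆, WeierstrassCurve.b₈]
  ring

lemma b_ne_zero_of_Δ_ne_zero (hΔ : (Ebc b c).Δ ≠ 0) : b ≠ 0 := by
  rintro rfl
  exact hΔ (by rw [Δ_eq]; ring)

lemma negY_eq (x y : K) : (Ebc b c).negY x y = -y - (1 - c) * x + b := by
  simp only [negY, Ebc]
  ring

variable [DecidableEq K]

lemma exists_P₀_add_self (hΔ : (Ebc b c).Δ ≠ 0) :
    ∃ h : (Ebc b c).Nonsingular b (b * c), P₀ b c hΔ + P₀ b c hΔ = Point.some _ _ h := by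
  have hy : (0 : K) ≠ (Ebc b c).negY 0 0 := by
    rw [negY_eq]
    simpa using (b_ne_zero_of_Δ_ne_zero hΔ).symm
  have hslope : (Ebc b c).slope 0 0 0 0 = 0 := by
    rw [slope_of_Y_ne rfl hy]
    simp [Ebc]
  refine Point.exists_add_self_eq_some _ hy ?_ ?_ <;> rw [hslope] <;>
    simp only [addY, negAddY, addX, negY, Ebc] <;> ring

lemma exists_some_b_mul_c_add_self (hb : b ≠ 0) (hc : c ≠ 0)
    (h : (Ebc b c).Nonsingular b (b * c)) :
    ∃ h' : (Ebc b c).Nonsingular (b * (b - c) / c ^ 2) (b ^ 2 * (c ^ 2 + c - b) / c ^ 3),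
      Point.some _ _ h + Point.some _ _ h = Point.some _ _ h' := by
  have hneg : (Ebc b c).negY b (b * c) = 0 := by
    rw [negY_eq]
    ring
  have hy : b * c ≠ (Ebc b c).negY b (b * c) := hneg ▸ mul_ne_zero hb hc
  have hslope : (Ebc b c).slope b b (b * c) (b * c) = (c ^ 2 - c + b) / c := by
    rw [slope_of_Y_ne rfl hy, hneg]
    simp only [Ebc]
    field_simp
    ring
  refine Point.exists_add_self_eq_some _ hy ?_ ?_ <;> rw [hslope] <;>
    simp only [addY, negAddY, addX, negY, Ebc] <;> field_simp <;> ring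

end Ebc

open Classical in
theorem stmt_3 {K : Type*} [Field K] (b c : K) (hΔ : (Ebc b c).Δ ≠ 0) (hc : c ≠ 0) :
    ∃ h : (Ebc b c).Nonsingular (b * (b - c) / c ^ 2) (b ^ 2 * (c ^ 2 + c - b) / c ^ 3),
      4 • P₀ b c hΔ = WeierstrassCurve.Affine.Point.some _ _ h := by
  obtain ⟨h₂, hP₀⟩ := Ebc.exists_P₀_add_self hΔ
  obtain ⟨h₄, hQ⟩ := Ebc.exists_some_b_mul_c_add_self (Ebc.b_ne_zero_of_Δ_ne_zero hΔ) hc h₂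
  refine ⟨h₄, ?_⟩
  rw [show (4 : ℕ) = 2 * 2 from rfl, mul_nsmul, two_nsmul, two_nsmul, hP₀, hQ]
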